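/- arXiv:2511.08868 — 2 statements merged into one kernel-verified Lean document; each statement's English description precedes it below -/
import Mathlib

section
/- Let V : [t0,tf] → ℝ be absolutely continuous with V(t0) ≤ c, let α > 0, and let λ : [t0,tf] → ℝ be measurable with 0 ≤ λ(t) ≤ α for almost all t. Suppose that for almost all t, V'(t) + α·V(t) ≤ λ(t)·c. Then V(t) ≤ c for all t ∈ [t0,tf]. -/
open Matrix MeasureTheory

theorem stmt0 (t0 tf c α : ℝ) (ht : t0 ≤ tf) (hc : 0 ≤ c) (hα : 0 < α)
    (V V' lam : ℝ → ℝ)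
    (hV'int : IntervalIntegrable V' volume t0 tf)
    (hAC : ∀ t ∈ Set.Icc t0 tf, V t = V t0 + ∫ s in t0..t, V' s)
    (hV0 : V t0 ≤ c)
    (hmeas : Measurable lam)
    (hlam : ∀ᵐ t ∂(volume.restrict (Set.Icc t0 tf)), 0 ≤ lam t ∧ lam t ≤ α)
    (hineq : ∀ᵐ t ∂(volume.restrict (Set.Icc t0 tf)), V' t + α * V t ≤ lam t * c) :
    ∀ t ∈ Set.Icc t0 tf, V t ≤ c := by
  -- V is continuous on [t0, tf]
  have huIcc : Set.uIcc t0 tf = Set.Icc t0 tf := Set.uIcc_of_le ht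
  have hVcont : ContinuousOn V (Set.Icc t0 tf) := by
    have h1 : ContinuousOn (fun x => V t0 + ∫ s in t0..x, V' s) (Set.Icc t0 tf) := by
      refine continuousOn_const.add ?_
      have := intervalIntegral.continuousOn_primitive_interval' hV'int
        (a := t0) (by rw [huIcc]; exact Set.left_mem_Icc.2 ht)
      rwa [huIcc] at this
    exact h1.congr hAC
  by_contra hcon
  push_neg at hcon
  obtain ⟨t1, ht1, hVt1⟩ := hcon
  -- set of times ≤ t1 where V ≤ c
  set S : Set ℝ := Set.Icc t0 t1 ∩ V ⁻¹' Set.Iic c with hS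
  have hsub : Set.Icc t0 t1 ⊆ Set.Icc t0 tf := Set.Icc_subset_Icc le_rfl ht1.2
  have hScl : IsClosed S :=
    (hVcont.mono hsub).preimage_isClosed_of_isClosed isClosed_Icc isClosed_Iic
  have hScompact : IsCompact S := isCompact_Icc.of_isClosed_subset hScl Set.inter_subset_left
  have hSne : S.Nonempty := ⟨t0, ⟨le_rfl, ht1.1⟩, hV0⟩
  set s := sSup S with hs
  have hsmem : s ∈ S := hScompact.sSup_mem hSne
  have hsIcc : s ∈ Set.Icc t0 t1 := hsmem.1
  have hVs : V s ≤ c := hsmem.2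
  have hst1 : s < t1 := by
    rcases lt_or_eq_of_le hsIcc.2 with h | h
    · exact h
    · exact absurd (h ▸ hVs) (not_le.2 hVt1)
  -- on (s, t1], V > c
  have hVgt : ∀ u ∈ Set.Ioc s t1, c < V u := by
    intro u hu
    by_contra hle
    push_neg at hle
    have : u ∈ S := ⟨⟨hsIcc.1.trans hu.1.le, hu.2⟩, hle⟩
    exact absurd (le_csSup hScompact.bddAbove this) (not_le.2 hu.1)
  -- V' ≤ 0 a.e. on Ioc s t1
  have hsubIoc : Set.Ioc s t1 ⊆ Set.Icc t0 tf := fun u hu =>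
    ⟨hsIcc.1.trans hu.1.le, hu.2.trans ht1.2⟩
  have hmono : volume.restrict (Set.Ioc s t1) ≤ volume.restrict (Set.Icc t0 tf) :=
    Measure.restrict_mono hsubIoc le_rfl
  have hlam' := (ae_mono hmono) hlam
  have hineq' := (ae_mono hmono) hineq
  have hV'nonpos : ∀ᵐ u ∂(volume.restrict (Set.Ioc s t1)), V' u ≤ 0 := by
    have hmem : ∀ᵐ u ∂(volume.restrict (Set.Ioc s t1)), u ∈ Set.Ioc s t1 :=
      ae_restrict_mem measurableSet_Ioc
    filter_upwards [hlam', hineq', hmem] with u hl hi hm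
    have h1 : lam u * c ≤ α * c := mul_le_mul_of_nonneg_right hl.2 hc
    have h2 : α * c ≤ α * V u := mul_le_mul_of_nonneg_left (hVgt u hm).le hα.le
    linarith
  -- integral of V' over [s, t1] is nonpositive
  have hint : IntervalIntegrable V' volume s t1 :=
    hV'int.mono_set (by rw [huIcc]; exact (Set.uIcc_of_le hst1.le).symm ▸ (Set.Icc_subset_Icc hsIcc.1 (ht1.2)) )
  have hintle : (∫ u in s..t1, V' u) ≤ 0 := by
    rw [intervalIntegral.integral_of_le hst1.le]
    exact integral_nonpos_of_ae hV'nonpos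
  -- FTC decomposition
  have hsIcctf : s ∈ Set.Icc t0 tf := ⟨hsIcc.1, hsIcc.2.trans ht1.2⟩
  have hdiff : V t1 = V s + ∫ u in s..t1, V' u := by
    have h1 := hAC t1 ht1
    have h2 := hAC s hsIcctf
    have hadd : (∫ u in t0..s, V' u) + (∫ u in s..t1, V' u) = ∫ u in t0..t1, V' u := by
      apply intervalIntegral.integral_add_adjacent_intervals
      · exact hV'int.mono_set (by rw [huIcc, Set.uIcc_of_le hsIcc.1]; exact Set.Icc_subset_Icc le_rfl hsIcctf.2)
      · exact hint
    rw [h1, h2, ← hadd]; ring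
  have : V t1 ≤ c := by
    rw [hdiff]
    linarith
  exact absurd this (not_le.2 hVt1)
end

section
/- Let K be an m×n real matrix, Q an n×n symmetric positive definite matrix, and c > 0. If η ∈ ℝⁿ satisfies ηᵀQ⁻¹η ≤ c, then Kη lies in the set {(c·KQKᵀ)^{1/2} y : ‖y‖₂ ≤ 1}. -/
/-! Since `Q` is positive definite, `K Q Kᵀ` has the same range as `K`, so `K η = M (M u)` for some
`u`, where `M = (c K Q Kᵀ)^{1/2}`. For `y = M u` we get `‖y‖² = uᵀ K η = ⟨Q Kᵀ u, η⟩_{Q⁻¹}`, and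
Cauchy–Schwarz for the inner product `Q⁻¹` bounds its square by
`(uᵀ K Q Kᵀ u) (ηᵀ Q⁻¹ η) ≤ c (uᵀ K Q Kᵀ u) = ‖y‖²`; hence `‖y‖ ≤ 1`. -/

open Matrix

/-- The square root of a positive semidefinite matrix, as defined in Mathlib (Dec 2024). -/
noncomputable def Matrix.PosSemidef.sqrt {n : Type*} [Fintype n] [DecidableEq n]
    {A : Matrix n n ℝ} (hA : A.PosSemidef) : Matrix n n ℝ :=
  hA.1.eigenvectorUnitary.1 * diagonal ((↑) ∘ (√·) ∘ hA.1.eigenvalues) *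
  (star hA.1.eigenvectorUnitary : Matrix n n ℝ)

namespace Matrix

variable {m n : Type*} [Fintype m] [Fintype n]

theorem PosSemidef.sqrt_mul_self [DecidableEq n] {A : Matrix n n ℝ} (hA : A.PosSemidef) :
    hA.sqrt * hA.sqrt = A := by
  set U : Matrix n n ℝ := hA.1.eigenvectorUnitary.1
  have hU : (star hA.1.eigenvectorUnitary : Matrix n n ℝ) * U = 1 := Unitary.coe_star_mul_self _
  conv_rhs => rw [hA.1.spectral_theorem, Unitary.conjStarAlgAut_apply]
  simp only [sqrt, Matrix.mul_assoc]
  rw [← Matrix.mul_assoc _ U, hU, Matrix.one_mul, ← Matrix.mul_assoc (diagonal _),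
    diagonal_mul_diagonal]
  congr 3
  ext i
  simp [Real.mul_self_sqrt (hA.eigenvalues_nonneg i)]

theorem PosSemidef.transpose_sqrt [DecidableEq n] {A : Matrix n n ℝ} (hA : A.PosSemidef) :
    hA.sqrtᵀ = hA.sqrt := by
  rw [← conjTranspose_eq_transpose_of_trivial]
  exact isHermitian_mul_mul_conjTranspose (hA.1.eigenvectorUnitary : Matrix n n ℝ)
    (isHermitian_diagonal ((↑) ∘ (√·) ∘ hA.1.eigenvalues : n → ℝ))

theorem PosSemidef.sq_dotProduct_mulVec_le {B : Matrix n n ℝ} (hB : B.PosSemidef) (x y : n → ℝ) :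
    (x ⬝ᵥ B *ᵥ y) ^ 2 ≤ (x ⬝ᵥ B *ᵥ x) * (y ⬝ᵥ B *ᵥ y) := by
  let := B.toSeminormedAddCommGroup hB
  let := B.toInnerProductSpace hB
  have h := real_inner_mul_inner_self_le x y
  change (B *ᵥ y) ⬝ᵥ x * ((B *ᵥ y) ⬝ᵥ x) ≤ (B *ᵥ x) ⬝ᵥ x * ((B *ᵥ y) ⬝ᵥ y) at h
  simpa only [dotProduct_comm _ x, dotProduct_comm _ y, sq] using h

theorem PosDef.sq_dotProduct_le [DecidableEq n] {Q : Matrix n n ℝ} (hQ : Q.PosDef) (a x : n → ℝ) :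
    (a ⬝ᵥ x) ^ 2 ≤ (a ⬝ᵥ Q *ᵥ a) * (x ⬝ᵥ Q⁻¹ *ᵥ x) := by
  have hdet : IsUnit Q.det := (isUnit_iff_isUnit_det Q).mp hQ.isUnit
  have hQt : Qᵀ = Q := by simpa using hQ.1.eq
  have hmix : (Q *ᵥ a) ⬝ᵥ Q⁻¹ *ᵥ x = a ⬝ᵥ x := by
    rw [dotProduct_mulVec, ← vecMul_transpose, hQt, vecMul_vecMul, mul_nonsing_inv _ hdet,
      vecMul_one]
  have hself : (Q *ᵥ a) ⬝ᵥ Q⁻¹ *ᵥ (Q *ᵥ a) = a ⬝ᵥ Q *ᵥ a := by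
    rw [mulVec_mulVec, nonsing_inv_mul _ hdet, one_mulVec, dotProduct_comm]
  simpa only [hmix, hself] using hQ.posSemidef.inv.sq_dotProduct_mulVec_le (Q *ᵥ a) x

theorem dotProduct_mul_mul_transpose_mulVec (K : Matrix m n ℝ) (Q : Matrix n n ℝ) (u : m → ℝ) :
    u ⬝ᵥ (K * Q * Kᵀ) *ᵥ u = (Kᵀ *ᵥ u) ⬝ᵥ Q *ᵥ (Kᵀ *ᵥ u) := by
  rw [← mulVec_mulVec, ← mulVec_mulVec, dotProduct_mulVec, mulVec_transpose]

theorem ker_mulVecLin_mul_posDef_mul_transpose {Q : Matrix n n ℝ} (hQ : Q.PosDef)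
    (K : Matrix m n ℝ) :
    LinearMap.ker (K * Q * Kᵀ).mulVecLin = LinearMap.ker Kᵀ.mulVecLin := by
  ext u
  simp only [LinearMap.mem_ker, mulVecLin_apply]
  refine ⟨fun h => ?_, fun h => by rw [← mulVec_mulVec, h, mulVec_zero]⟩
  by_contra hne
  have hpos := hQ.dotProduct_mulVec_pos hne
  rw [star_trivial, ← dotProduct_mul_mul_transpose_mulVec, h, dotProduct_zero] at hpos
  exact lt_irrefl 0 hpos

theorem range_mulVecLin_mul_posDef_mul_transpose {Q : Matrix n n ℝ} (hQ : Q.PosDef)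
    (K : Matrix m n ℝ) :
    LinearMap.range (K * Q * Kᵀ).mulVecLin = LinearMap.range K.mulVecLin := by
  have hle : LinearMap.range (K * Q * Kᵀ).mulVecLin ≤ LinearMap.range K.mulVecLin := by
    rw [Matrix.mul_assoc, mulVecLin_mul]
    exact LinearMap.range_comp_le_range _ _
  refine Submodule.eq_of_le_of_finrank_le hle ?_
  have hrank := (LinearMap.finrank_range_add_finrank_ker (K * Q * Kᵀ).mulVecLin).trans
    (LinearMap.finrank_range_add_finrank_ker Kᵀ.mulVecLin).symm
  rw [ker_mulVecLin_mul_posDef_mul_transpose hQ, add_left_inj] at hrank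
  have := rank_transpose K
  rw [rank, rank] at this
  omega

theorem exists_mulVec_eq_of_mul_self_eq_smul [DecidableEq n] {K : Matrix m n ℝ}
    {Q : Matrix n n ℝ} (hQ : Q.PosDef) {c : ℝ} (hc : 0 < c) {M : Matrix m m ℝ} (hMt : Mᵀ = M)
    (hMM : M * M = c • (K * Q * Kᵀ)) {η : n → ℝ} (hη : η ⬝ᵥ Q⁻¹ *ᵥ η ≤ c) :
    ∃ y : m → ℝ, y ⬝ᵥ y ≤ 1 ∧ K *ᵥ η = M *ᵥ y := by
  obtain ⟨u, hu⟩ : ∃ u, M *ᵥ (M *ᵥ u) = K *ᵥ η := by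
    obtain ⟨w, hw⟩ : K *ᵥ η ∈ LinearMap.range (K * Q * Kᵀ).mulVecLin := by
      rw [range_mulVecLin_mul_posDef_mul_transpose hQ]
      exact ⟨η, rfl⟩
    refine ⟨c⁻¹ • w, ?_⟩
    rw [mulVec_mulVec, hMM, smul_mulVec, mulVec_smul, ← mulVecLin_apply, hw, smul_smul,
      mul_inv_cancel₀ hc.ne', one_smul]
  refine ⟨M *ᵥ u, ?_, hu.symm⟩
  set s := (M *ᵥ u) ⬝ᵥ (M *ᵥ u)
  have hs_self : s = u ⬝ᵥ M *ᵥ (M *ᵥ u) := by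
    rw [dotProduct_mulVec u M, ← mulVec_transpose, hMt]
  have hs_lin : s = (Kᵀ *ᵥ u) ⬝ᵥ η := by
    rw [hs_self, hu, dotProduct_mulVec, mulVec_transpose]
  have hs_quad : s = c * ((Kᵀ *ᵥ u) ⬝ᵥ Q *ᵥ (Kᵀ *ᵥ u)) := by
    rw [hs_self, mulVec_mulVec, hMM, smul_mulVec, dotProduct_smul, smul_eq_mul,
      dotProduct_mul_mul_transpose_mulVec]
  have hquad_nonneg : 0 ≤ (Kᵀ *ᵥ u) ⬝ᵥ Q *ᵥ (Kᵀ *ᵥ u) := by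
    simpa using hQ.posSemidef.dotProduct_mulVec_nonneg (Kᵀ *ᵥ u)
  have hs_sq : s ^ 2 ≤ s := calc
    s ^ 2 = ((Kᵀ *ᵥ u) ⬝ᵥ η) ^ 2 := by rw [hs_lin]
    _ ≤ ((Kᵀ *ᵥ u) ⬝ᵥ Q *ᵥ (Kᵀ *ᵥ u)) * (η ⬝ᵥ Q⁻¹ *ᵥ η) := hQ.sq_dotProduct_le _ _
    _ ≤ ((Kᵀ *ᵥ u) ⬝ᵥ Q *ᵥ (Kᵀ *ᵥ u)) * c := mul_le_mul_of_nonneg_left hη hquad_nonneg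
    _ = s := by rw [hs_quad, mul_comm]
  nlinarith

end Matrix

theorem stmt3 (m n : ℕ) (K : Matrix (Fin m) (Fin n) ℝ) (Q : Matrix (Fin n) (Fin n) ℝ)
    (c : ℝ) (hQ : Q.PosDef) (hc : 0 < c)
    (hpsd : (c • (K * Q * Kᵀ)).PosSemidef)
    (η : Fin n → ℝ) (hη : η ⬝ᵥ Q⁻¹.mulVec η ≤ c) :
    ∃ y : Fin m → ℝ, (∑ i, y i ^ 2) ≤ 1 ∧ K.mulVec η = hpsd.sqrt.mulVec y := by
  obtain ⟨y, hy, hKη⟩ := exists_mulVec_eq_of_mul_self_eq_smul hQ hc hpsd.transpose_sqrt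
    hpsd.sqrt_mul_self hη
  exact ⟨y, by simpa only [dotProduct, sq] using hy, hKη⟩
end
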